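/- arXiv:0711.0705 — 5 statements merged into one kernel-verified Lean document; each statement's English description precedes it below -/
import Mathlib

section
/- Let X, Y be finite alphabets and n >= 1. The directed information functional I(Q; P) = sum_{x^n,y^n} Q(x^n||y^{n-1}) P(y^n||x^n) log( P(y^n||x^n) / sum_{x'^n} Q(x'^n||y^{n-1}) P(y^n||x'^n) ) is uniformly continuous in Q: if the L1 distance between Q1 and Q2 is at most Delta <= 1/2, then |I(Q1;P) - I(Q2;P)| <= -Delta log(Delta / |Y^n|^2) for every channel causal conditioning P. -/
/-- `Q` is a causal conditioning input distribution `Q(x^n ‖ y^{n-1})`: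
nonnegative, normalized for every `y^n`, and the marginal of any length-`i`
prefix of `x^n` depends on `y^n` only through its first `i-1` coordinates. -/
def IsCausalIn {X Y : Type} [Fintype X] [DecidableEq X] [Fintype Y] (n : ℕ)
    (Q : (Fin n → X) → (Fin n → Y) → ℝ) : Prop :=
  (∀ x y, 0 ≤ Q x y) ∧ (∀ y, ∑ x, Q x y = 1) ∧
  ∀ (i : ℕ), i ≤ n → ∀ (x : Fin n → X) (y y' : Fin n → Y),
    (∀ j : Fin n, (j : ℕ) + 1 < i → y j = y' j) →
    (∑ x' ∈ Finset.univ.filter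
        (fun x' : Fin n → X => ∀ j : Fin n, (j : ℕ) < i → x' j = x j), Q x' y) =
      ∑ x' ∈ Finset.univ.filter
        (fun x' : Fin n → X => ∀ j : Fin n, (j : ℕ) < i → x' j = x j), Q x' y'

/-- `P` is a channel causal conditioning distribution `P(y^n ‖ x^n)`:
nonnegative, normalized for every `x^n`, and the marginal of any length-`i`
prefix of `y^n` depends on `x^n` only through its first `i` coordinates. -/
def IsCausalCh {X Y : Type} [Fintype X] [Fintype Y] [DecidableEq Y] (n : ℕ)
    (P : (Fin n → Y) → (Fin n → X) → ℝ) : Prop :=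
  (∀ y x, 0 ≤ P y x) ∧ (∀ x, ∑ y, P y x = 1) ∧
  ∀ (i : ℕ), i ≤ n → ∀ (y : Fin n → Y) (x x' : Fin n → X),
    (∀ j : Fin n, (j : ℕ) < i → x j = x' j) →
    (∑ y' ∈ Finset.univ.filter
        (fun y' : Fin n → Y => ∀ j : Fin n, (j : ℕ) < i → y' j = y j), P y' x) =
      ∑ y' ∈ Finset.univ.filter
        (fun y' : Fin n → Y => ∀ j : Fin n, (j : ℕ) < i → y' j = y j), P y' x'

/-- Directed information functional
`I(Q;P) = ∑_{x^n,y^n} Q(x^n‖y^{n-1}) P(y^n‖x^n) log (P(y^n‖x^n) / ∑_{x'} Q(x'‖y^{n-1}) P(y^n‖x'))`. -/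
noncomputable def DI {X Y : Type} [Fintype X] [Fintype Y] (n : ℕ)
    (Q : (Fin n → X) → (Fin n → Y) → ℝ)
    (P : (Fin n → Y) → (Fin n → X) → ℝ) : ℝ :=
  ∑ x, ∑ y, Q x y * P y x * Real.log (P y x / ∑ x', Q x' y * P y x')

/-!
Write `I(Q;P) = H(Y) - H(Y‖X)` and compare the two entropies separately, with `η t = -t log t`.
The causally conditioned entropy `∑ Q · η(P)` is linear in `Q` with coefficients in `[0, 1/e]`,
so it moves by at most `Δ/e ≤ Δ log |Y^n|`. The output distributions induced by `Q₁` and `Q₂` are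
within `Δ` in `L¹`; the continuity bound `|η a - η b| ≤ η |a - b|` (for `|a - b| ≤ 1/2`) and the
tangent-line bound `η t ≤ t (log c - 1) + 1/c` at `c = |Y^n|/Δ` bound the change of the output
entropy by `Δ log (|Y^n|/Δ)`. The two contributions add up to `Δ log (|Y^n|²/Δ)`.
-/

open Real Finset

theorem ConcaveOn.map_add_sub_map_le_of_le {s : Set ℝ} {f : ℝ → ℝ} (hf : ConcaveOn ℝ s f)
    {x y u : ℝ} (hx : x ∈ s) (hyu : y + u ∈ s) (hxy : x ≤ y) (hu : 0 ≤ u) :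
    f (y + u) - f y ≤ f (x + u) - f x := by
  rcases (show x ≤ y + u by linarith).eq_or_lt with hxyu | hxyu
  · obtain rfl : u = 0 := by linarith
    obtain rfl : x = y := by linarith
    rfl
  set d := y + u - x
  have hd : 0 < d := by linarith
  have hμ : 0 ≤ u / d := by positivity
  have hν : 0 ≤ (y - x) / d := div_nonneg (by linarith) hd.le
  -- `x + u` and `y` are the convex combinations of `x` and `y + u` with swapped weights.
  have hsum : (y - x) / d + u / d = 1 := by field_simp; ring
  have h₁ := hf.2 hx hyu hν hμ hsum
  have h₂ := hf.2 hx hyu hμ hν ((add_comm _ _).trans hsum)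
  have e₁ : ((y - x) / d) • x + (u / d) • (y + u) = x + u := by
    simp only [smul_eq_mul, d]; field_simp; ring
  have e₂ : (u / d) • x + ((y - x) / d) • (y + u) = y := by
    simp only [smul_eq_mul, d]; field_simp; ring
  rw [e₁] at h₁
  rw [e₂] at h₂
  simp only [smul_eq_mul] at h₁ h₂
  have key : (f x + f (y + u)) * ((y - x) / d + u / d) ≤ f (x + u) + f y := by linarith
  rw [hsum, mul_one] at key
  linarith

namespace Real

theorem negMulLog_le_mul_add_inv {c t : ℝ} (hc : 0 < c) (ht : 0 ≤ t) :
    negMulLog t ≤ t * (log c - 1) + c⁻¹ := by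
  have h := negMulLog_le_one_sub_self (mul_nonneg hc.le ht)
  rw [negMulLog_mul, negMulLog] at h
  rw [← mul_le_mul_iff_of_pos_left hc, mul_add, mul_inv_cancel₀ hc.ne']
  linarith

theorem negMulLog_le_inv_exp_one {t : ℝ} (ht : 0 ≤ t) : negMulLog t ≤ (exp 1)⁻¹ := by
  simpa using negMulLog_le_mul_add_inv (exp_pos 1) ht

theorem negMulLog_add_le {a b : ℝ} (ha : 0 ≤ a) (hb : 0 ≤ b) :
    negMulLog (a + b) ≤ negMulLog a + negMulLog b := by
  have key : ∀ {s t : ℝ}, 0 ≤ s → 0 ≤ t → s * log s ≤ s * log (s + t) := by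
    intro s t hs ht
    rcases hs.eq_or_lt with rfl | hs
    · simp
    · exact mul_le_mul_of_nonneg_left (log_le_log hs (by linarith)) hs.le
  have h₁ := key ha hb
  have h₂ := key hb ha
  rw [add_comm b a] at h₂
  simp only [negMulLog]
  linarith

theorem negMulLog_one_sub_le {u : ℝ} (hu₀ : 0 ≤ u) (hu : u ≤ 1 / 2) :
    negMulLog (1 - u) ≤ negMulLog u := by
  rcases hu₀.eq_or_lt with rfl | hu₀
  · simp
  -- `log` lies above its chord on `[1/2, 1]` and below its tangent at `1/2`.
  have hlog₂ : log 2 < 1 := by linarith [log_two_lt_d9]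
  have hchord : -(2 * u * log 2) ≤ log (1 - u) := by
    have h := strictConcaveOn_log_Ioi.concaveOn.2 (Set.mem_Ioi.2 one_pos)
      (Set.mem_Ioi.2 (by norm_num : (0:ℝ) < 1 / 2)) (by linarith : 0 ≤ 1 - 2 * u)
      (by linarith : 0 ≤ 2 * u) (by ring)
    rw [show (1 - 2 * u) • (1 : ℝ) + (2 * u) • (1 / 2 : ℝ) = 1 - u by
      simp only [smul_eq_mul]; ring] at h
    simp only [smul_eq_mul, log_one, one_div, log_inv] at h
    linarith
  have htangent : log 2 + log u ≤ 2 * u - 1 := by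
    rw [← log_mul two_ne_zero hu₀.ne']
    exact log_le_sub_one_of_pos (by linarith)
  simp only [negMulLog]
  nlinarith [mul_le_mul_of_nonneg_left hchord (by linarith : 0 ≤ 1 - u),
    mul_le_mul_of_nonneg_left htangent hu₀.le,
    mul_nonneg (by linarith : 0 ≤ 1 - log 2) (by linarith : 0 ≤ 1 - 2 * u)]

theorem abs_negMulLog_sub_le {a b : ℝ} (ha : 0 ≤ a) (hb : 0 ≤ b) (ha₁ : a ≤ 1) (hb₁ : b ≤ 1)
    (hab : |a - b| ≤ 1 / 2) : |negMulLog a - negMulLog b| ≤ negMulLog |a - b| := by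
  wlog h : a ≤ b generalizing a b
  · rw [abs_sub_comm, abs_sub_comm a b] at *
    exact this hb ha hb₁ ha₁ hab (le_of_not_ge h)
  obtain ⟨u, hu, rfl⟩ : ∃ u, 0 ≤ u ∧ b = a + u := ⟨b - a, by linarith, by ring⟩
  rw [show a - (a + u) = -u by ring, abs_neg, abs_of_nonneg hu] at hab ⊢
  -- By concavity, `η a - η (a + u)` is largest at `a = 1 - u`.
  have hinc := concaveOn_negMulLog.map_add_sub_map_le_of_le ha (by simp : (1 - u) + u ∈ _)
    (by linarith : a ≤ 1 - u) hu
  rw [sub_add_cancel, negMulLog_one, zero_sub] at hinc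
  rw [abs_le]
  constructor
  · linarith [negMulLog_add_le ha hu]
  · linarith [negMulLog_one_sub_le hu hab]

theorem sum_negMulLog_le {ι : Type*} [Fintype ι] {e : ι → ℝ} {Δ : ℝ} (he : ∀ i, 0 ≤ e i)
    (hΔ : 0 < Δ) (hsum : ∑ i, e i ≤ Δ) (hcard : exp 1 * Δ ≤ Fintype.card ι) :
    ∑ i, negMulLog (e i) ≤ Δ * log (Fintype.card ι / Δ) := by
  have hK : 0 < (Fintype.card ι : ℝ) := lt_of_lt_of_le (by positivity) hcard
  set c := (Fintype.card ι : ℝ) / Δ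
  have hc : exp 1 ≤ c := (le_div_iff₀ hΔ).2 hcard
  have hlog : 1 ≤ log c := (le_log_iff_exp_le (by positivity)).2 hc
  calc ∑ i, negMulLog (e i) ≤ ∑ i, (e i * (log c - 1) + c⁻¹) :=
        sum_le_sum fun i _ => negMulLog_le_mul_add_inv (by positivity) (he i)
    _ = (∑ i, e i) * (log c - 1) + Δ := by
        rw [sum_add_distrib, ← sum_mul, sum_const, card_univ, nsmul_eq_mul, inv_div,
          mul_div_cancel₀ _ hK.ne']
    _ ≤ Δ * (log c - 1) + Δ := by gcongr
    _ = Δ * log c := by ring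

end Real

section DirectedInformation

variable {α β : Type*} [Fintype α]

structure IsStochastic (W : α → β → ℝ) : Prop where
  nonneg : ∀ a b, 0 ≤ W a b
  sum_eq_one : ∀ b, ∑ a, W a b = 1

theorem IsStochastic.le_one {W : α → β → ℝ} (hW : IsStochastic W) (a : α) (b : β) :
    W a b ≤ 1 :=
  hW.sum_eq_one b ▸ single_le_sum (fun a _ => hW.nonneg a b) (mem_univ a)

variable [Fintype β]

def outputDist (Q : α → β → ℝ) (P : β → α → ℝ) (y : β) : ℝ :=
  ∑ x, Q x y * P y x

noncomputable def directedInfo (Q : α → β → ℝ) (P : β → α → ℝ) : ℝ :=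
  ∑ x, ∑ y, Q x y * P y x * log (P y x / outputDist Q P y)

noncomputable def outputEntropy (Q : α → β → ℝ) (P : β → α → ℝ) : ℝ :=
  ∑ y, negMulLog (outputDist Q P y)

noncomputable def causalCondEntropy (Q : α → β → ℝ) (P : β → α → ℝ) : ℝ :=
  ∑ x, ∑ y, Q x y * negMulLog (P y x)

variable {Q Q₁ Q₂ : α → β → ℝ} {P : β → α → ℝ}

theorem outputDist_nonneg (hQ : IsStochastic Q) (hP : IsStochastic P) (y : β) :
    0 ≤ outputDist Q P y :=
  sum_nonneg fun x _ => mul_nonneg (hQ.nonneg x y) (hP.nonneg y x)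

theorem outputDist_le_one (hQ : IsStochastic Q) (hP : IsStochastic P) (y : β) :
    outputDist Q P y ≤ 1 :=
  calc outputDist Q P y ≤ ∑ x, Q x y :=
        sum_le_sum fun x _ => mul_le_of_le_one_right (hQ.nonneg x y) (hP.le_one y x)
    _ = 1 := hQ.sum_eq_one y

theorem directedInfo_eq_sub (hQ : ∀ x y, 0 ≤ Q x y) (hP : ∀ y x, 0 ≤ P y x) :
    directedInfo Q P = outputEntropy Q P - causalCondEntropy Q P := by
  have hterm : ∀ x y, Q x y * P y x * log (P y x / outputDist Q P y) =
      -(Q x y * negMulLog (P y x)) - Q x y * P y x * log (outputDist Q P y) := by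
    intro x y
    by_cases h : Q x y * P y x = 0
    · simp [h, negMulLog, ← mul_assoc]
    have hr : Q x y * P y x ≤ outputDist Q P y :=
      single_le_sum (f := fun x => Q x y * P y x) (fun x _ => mul_nonneg (hQ x y) (hP y x))
        (mem_univ x)
    have hpos : 0 < Q x y * P y x := (mul_nonneg (hQ x y) (hP y x)).lt_of_ne' h
    rw [log_div (right_ne_zero_of_mul h) (hpos.trans_le hr).ne', negMulLog]
    ring
  have hout : ∑ x, ∑ y, Q x y * P y x * log (outputDist Q P y) = -outputEntropy Q P := by
    rw [sum_comm, outputEntropy, ← sum_neg_distrib]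
    refine sum_congr rfl fun y _ => ?_
    rw [← sum_mul, negMulLog, outputDist]
    ring
  simp only [directedInfo, hterm, sum_sub_distrib, sum_neg_distrib, hout, causalCondEntropy]
  ring

theorem sum_abs_outputDist_sub_le (hP : IsStochastic P) :
    ∑ y, |outputDist Q₁ P y - outputDist Q₂ P y| ≤ ∑ x, ∑ y, |Q₁ x y - Q₂ x y| :=
  calc ∑ y, |outputDist Q₁ P y - outputDist Q₂ P y| ≤ ∑ y, ∑ x, |Q₁ x y - Q₂ x y| := by
        refine sum_le_sum fun y _ => ?_
        rw [outputDist, outputDist, ← sum_sub_distrib]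
        refine (abs_sum_le_sum_abs _ _).trans (sum_le_sum fun x _ => ?_)
        rw [← sub_mul, abs_mul, abs_of_nonneg (hP.nonneg y x)]
        exact mul_le_of_le_one_right (abs_nonneg _) (hP.le_one y x)
    _ = ∑ x, ∑ y, |Q₁ x y - Q₂ x y| := sum_comm

theorem abs_causalCondEntropy_sub_le (hP : IsStochastic P) :
    |causalCondEntropy Q₁ P - causalCondEntropy Q₂ P| ≤
      (exp 1)⁻¹ * ∑ x, ∑ y, |Q₁ x y - Q₂ x y| := by
  rw [causalCondEntropy, causalCondEntropy, ← sum_sub_distrib, mul_sum]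
  refine (abs_sum_le_sum_abs _ _).trans (sum_le_sum fun x _ => ?_)
  rw [← sum_sub_distrib, mul_sum]
  refine (abs_sum_le_sum_abs _ _).trans (sum_le_sum fun y _ => ?_)
  rw [← sub_mul, abs_mul, abs_of_nonneg (negMulLog_nonneg (hP.nonneg y x) (hP.le_one y x)),
    mul_comm]
  exact mul_le_mul_of_nonneg_right (negMulLog_le_inv_exp_one (hP.nonneg y x)) (abs_nonneg _)

theorem abs_outputEntropy_sub_le {Δ : ℝ} (hQ₁ : IsStochastic Q₁) (hQ₂ : IsStochastic Q₂)
    (hP : IsStochastic P) (hΔ₀ : 0 < Δ) (hΔ : ∑ x, ∑ y, |Q₁ x y - Q₂ x y| ≤ Δ)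
    (hΔhalf : Δ ≤ 1 / 2) (hcard : exp 1 * Δ ≤ Fintype.card β) :
    |outputEntropy Q₁ P - outputEntropy Q₂ P| ≤ Δ * log (Fintype.card β / Δ) := by
  have hdist := (sum_abs_outputDist_sub_le hP).trans hΔ
  calc |outputEntropy Q₁ P - outputEntropy Q₂ P|
      ≤ ∑ y, |negMulLog (outputDist Q₁ P y) - negMulLog (outputDist Q₂ P y)| := by
        rw [outputEntropy, outputEntropy, ← sum_sub_distrib]
        exact abs_sum_le_sum_abs _ _
    _ ≤ ∑ y, negMulLog |outputDist Q₁ P y - outputDist Q₂ P y| :=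
        sum_le_sum fun y _ => abs_negMulLog_sub_le (outputDist_nonneg hQ₁ hP y)
          (outputDist_nonneg hQ₂ hP y) (outputDist_le_one hQ₁ hP y) (outputDist_le_one hQ₂ hP y)
          (((single_le_sum (fun y _ => abs_nonneg _) (mem_univ y)).trans hdist).trans hΔhalf)
    _ ≤ Δ * log (Fintype.card β / Δ) := sum_negMulLog_le (fun y => abs_nonneg _) hΔ₀ hdist hcard

theorem directedInfo_eq_zero_of_subsingleton [Subsingleton β] (hQ : IsStochastic Q)
    (hP : IsStochastic P) : directedInfo Q P = 0 := by
  have hP₁ : ∀ y x, P y x = 1 := fun y x => by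
    simpa [Fintype.sum_subsingleton _ y] using hP.sum_eq_one x
  have hr : ∀ y, outputDist Q P y = 1 := fun y => by
    simp [outputDist, hP₁, hQ.sum_eq_one]
  simp [directedInfo, hP₁, hr]

end DirectedInformation

theorem inv_exp_one_le_log_two : (exp 1)⁻¹ ≤ log 2 :=
  calc (exp 1)⁻¹ ≤ 2⁻¹ := inv_anti₀ two_pos exp_one_gt_two.le
    _ ≤ log 2 := by linarith [log_two_gt_d9]

theorem abs_directedInfo_sub_le {α β : Type*} [Fintype α] [Fintype β]
    {Q₁ Q₂ : α → β → ℝ} {P : β → α → ℝ} {Δ : ℝ} (hQ₁ : IsStochastic Q₁)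
    (hQ₂ : IsStochastic Q₂) (hP : IsStochastic P) (hΔ₀ : 0 < Δ) (hΔhalf : Δ ≤ 1 / 2)
    (hΔ : ∑ x, ∑ y, |Q₁ x y - Q₂ x y| ≤ Δ) :
    |directedInfo Q₁ P - directedInfo Q₂ P| ≤ -Δ * log (Δ / (Fintype.card β : ℝ) ^ 2) := by
  set K := (Fintype.card β : ℝ)
  rcases subsingleton_or_nontrivial β with hβ | hβ
  · rw [directedInfo_eq_zero_of_subsingleton hQ₁ hP, directedInfo_eq_zero_of_subsingleton hQ₂ hP,
      sub_self, abs_zero, neg_mul, neg_nonneg]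
    refine mul_nonpos_of_nonneg_of_nonpos hΔ₀.le (log_nonpos (by positivity) ?_)
    rcases (Fintype.card β).eq_zero_or_pos with hK | hK
    · simp [K, hK]
    · have : (1 : ℝ) ≤ K := Nat.one_le_cast.2 hK
      exact div_le_one_of_le₀ (by nlinarith) (by positivity)
  have hK : (2 : ℝ) ≤ K := Nat.ofNat_le_cast.2 Fintype.one_lt_card
  have hcard : exp 1 * Δ ≤ K := by nlinarith [exp_one_lt_three]
  calc |directedInfo Q₁ P - directedInfo Q₂ P|
      = |(outputEntropy Q₁ P - outputEntropy Q₂ P) -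
          (causalCondEntropy Q₁ P - causalCondEntropy Q₂ P)| := by
        rw [directedInfo_eq_sub hQ₁.nonneg hP.nonneg, directedInfo_eq_sub hQ₂.nonneg hP.nonneg]
        ring_nf
    _ ≤ |outputEntropy Q₁ P - outputEntropy Q₂ P| +
          |causalCondEntropy Q₁ P - causalCondEntropy Q₂ P| := abs_sub _ _
    _ ≤ Δ * log (K / Δ) + (exp 1)⁻¹ * Δ :=
        add_le_add (abs_outputEntropy_sub_le hQ₁ hQ₂ hP hΔ₀ hΔ hΔhalf hcard)
          ((abs_causalCondEntropy_sub_le hP).trans (by gcongr))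
    _ ≤ Δ * log (K / Δ) + Δ * log K := by
        rw [mul_comm _ Δ]
        gcongr
        exact inv_exp_one_le_log_two.trans (log_le_log two_pos hK)
    _ = -Δ * log (Δ / K ^ 2) := by
        rw [log_div hΔ₀.ne' (by positivity), log_div (by positivity) hΔ₀.ne', log_pow]
        ring

theorem IsCausalIn.isStochastic {X Y : Type} [Fintype X] [DecidableEq X] [Fintype Y] {n : ℕ}
    {Q : (Fin n → X) → (Fin n → Y) → ℝ} (hQ : IsCausalIn n Q) : IsStochastic Q :=
  ⟨hQ.1, hQ.2.1⟩

theorem IsCausalCh.isStochastic {X Y : Type} [Fintype X] [Fintype Y] [DecidableEq Y] {n : ℕ}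
    {P : (Fin n → Y) → (Fin n → X) → ℝ} (hP : IsCausalCh n P) : IsStochastic P :=
  ⟨hP.1, hP.2.1⟩

theorem DI_eq_directedInfo {X Y : Type} [Fintype X] [Fintype Y] (n : ℕ)
    (Q : (Fin n → X) → (Fin n → Y) → ℝ) (P : (Fin n → Y) → (Fin n → X) → ℝ) :
    DI n Q P = directedInfo Q P :=
  rfl

/-- Uniform continuity of directed information (Lemma 4 of the paper): if two causal
conditioning input distributions are within `Δ ≤ 1/2` in `L¹` distance, then for every
channel causal conditioning `P`,
`|I(Q1;P) - I(Q2;P)| ≤ -Δ log (Δ / |Y^n|²)`. -/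
theorem di_uniform_continuity {X Y : Type} [Fintype X] [DecidableEq X]
    [Fintype Y] [DecidableEq Y] (n : ℕ)
    (Q1 Q2 : (Fin n → X) → (Fin n → Y) → ℝ)
    (P : (Fin n → Y) → (Fin n → X) → ℝ) (Δ : ℝ)
    (hQ1 : IsCausalIn n Q1) (hQ2 : IsCausalIn n Q2) (hP : IsCausalCh n P)
    (hΔpos : 0 < Δ) (hΔhalf : Δ ≤ 1 / 2)
    (hΔ : ∑ x, ∑ y, |Q1 x y - Q2 x y| ≤ Δ) :
    |DI n Q1 P - DI n Q2 P| ≤ -Δ * Real.log (Δ / ((Fintype.card Y : ℝ) ^ n) ^ 2) := by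
  have hcard : (Fintype.card Y : ℝ) ^ n = Fintype.card (Fin n → Y) := by simp
  rw [DI_eq_directedInfo, DI_eq_directedInfo, hcard]
  exact abs_directedInfo_sub_le hQ1.isStochastic hQ2.isStochastic hP.isStochastic hΔpos hΔhalf hΔ
end

section
/- For jointly distributed random sequences X^n = (X_1,...,X_n) and Y^n = (Y_1,...,Y_n) on finite alphabets, the directed information satisfies Kim's identity: sum_{i=1}^n I(Y_i; X^i | Y^{i-1}) = sum_{i=1}^n I(X_i; Y_i^n | X^{i-1}, Y^{i-1}), where Y_i^n = (Y_i,...,Y_n). -/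
/-- Conditional mutual information `I(f(ω); g(ω) | h(ω))` of finite-valued random
variables under the pmf `p` on a finite sample space `Ω`, defined by the usual sum
`∑ q(a,b,c) log (q(a,b,c) q(c) / (q(a,c) q(b,c)))`. -/
noncomputable def condMI {Ω A B C : Type} [Fintype Ω] [Fintype A] [Fintype B] [Fintype C]
    [DecidableEq A] [DecidableEq B] [DecidableEq C]
    (p : Ω → ℝ) (f : Ω → A) (g : Ω → B) (h : Ω → C) : ℝ :=
  ∑ a : A, ∑ b : B, ∑ c : C,
    (∑ ω ∈ Finset.univ.filter (fun ω => f ω = a ∧ g ω = b ∧ h ω = c), p ω) *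
      Real.log
        (((∑ ω ∈ Finset.univ.filter (fun ω => f ω = a ∧ g ω = b ∧ h ω = c), p ω) *
            (∑ ω ∈ Finset.univ.filter (fun ω => h ω = c), p ω)) /
          ((∑ ω ∈ Finset.univ.filter (fun ω => f ω = a ∧ h ω = c), p ω) *
            (∑ ω ∈ Finset.univ.filter (fun ω => g ω = b ∧ h ω = c), p ω)))

/-! Expand every conditional mutual information into joint entropies,
`I(A; B | C) = H(A, C) + H(B, C) - H(A, B, C) - H(C)`. Each joint variable that occurs carries
the same information as a pair of prefixes `(X^a, Y^b)`; writing `H(a, b)` for its entropy, the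
`i`-th summand of the left side minus that of the right side is `F (i + 1) - F i` with
`F j = H(0, j) + H(j, n) - H(j, j)`, so the difference of the sums telescopes to
`F n - F 0 = H(0, n) - H(0, n) = 0`. -/

open Finset Real

section Entropy

variable {Ω : Type} [Fintype Ω] (p : Ω → ℝ)

noncomputable def fiberMass {V : Type} [DecidableEq V] (φ : Ω → V) (ω : Ω) : ℝ :=
  ∑ ω' with φ ω' = φ ω, p ω'

-- `H(φ) = -∑ ω, p ω log P(φ = φ ω)`, which is `-∑ v, P(φ = v) log P(φ = v)` grouped by fibres.
noncomputable def entropy {V : Type} [DecidableEq V] (φ : Ω → V) : ℝ :=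
  -∑ ω, p ω * log (fiberMass p φ ω)

theorem entropy_congr {V W : Type} [DecidableEq V] [DecidableEq W] {φ : Ω → V} {ψ : Ω → W}
    (h : ∀ ω ω', φ ω = φ ω' ↔ ψ ω = ψ ω') : entropy p φ = entropy p ψ := by
  simp only [entropy, fiberMass, h]

theorem fiberMass_pos (hp : ∀ ω, 0 ≤ p ω) {V : Type} [DecidableEq V] (φ : Ω → V) {ω : Ω}
    (hω : p ω ≠ 0) : 0 < fiberMass p φ ω :=
  (lt_of_le_of_ne (hp ω) hω.symm).trans_le
    (single_le_sum (fun ω _ => hp ω) (mem_filter.2 ⟨mem_univ ω, rfl⟩))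

theorem sum_fiberwise_mul {V : Type} [Fintype V] [DecidableEq V] (φ : Ω → V) (L : V → ℝ) :
    ∑ v, (∑ ω with φ ω = v, p ω) * L v = ∑ ω, p ω * L (φ ω) := by
  rw [← sum_fiberwise univ φ (fun ω => p ω * L (φ ω))]
  refine sum_congr rfl fun v _ => ?_
  rw [sum_mul]
  exact sum_congr rfl fun ω hω => by rw [(mem_filter.1 hω).2]

variable {A B C : Type} [Fintype A] [Fintype B] [Fintype C]
  [DecidableEq A] [DecidableEq B] [DecidableEq C] (f : Ω → A) (g : Ω → B) (h : Ω → C)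

theorem condMI_eq_sum_log :
    condMI p f g h = ∑ ω, p ω * log
      (fiberMass p (fun ω => (f ω, g ω, h ω)) ω * fiberMass p h ω /
        (fiberMass p (fun ω => (f ω, h ω)) ω * fiberMass p (fun ω => (g ω, h ω)) ω)) := by
  have := sum_fiberwise_mul p (fun ω => (f ω, g ω, h ω)) fun v =>
    log ((∑ ω with (f ω, g ω, h ω) = v, p ω) * (∑ ω with h ω = v.2.2, p ω) /
      ((∑ ω with f ω = v.1 ∧ h ω = v.2.2, p ω) * (∑ ω with g ω = v.2.1 ∧ h ω = v.2.2, p ω)))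
  simpa only [Fintype.sum_prod_type, Prod.mk.injEq, fiberMass, condMI] using this

theorem condMI_eq_entropy (hp : ∀ ω, 0 ≤ p ω) :
    condMI p f g h = entropy p (fun ω => (f ω, h ω)) + entropy p (fun ω => (g ω, h ω))
      - entropy p (fun ω => (f ω, g ω, h ω)) - entropy p h := by
  have hlog : ∀ ω, p ω * log
      (fiberMass p (fun ω => (f ω, g ω, h ω)) ω * fiberMass p h ω /
        (fiberMass p (fun ω => (f ω, h ω)) ω * fiberMass p (fun ω => (g ω, h ω)) ω)) =
      p ω * log (fiberMass p (fun ω => (f ω, g ω, h ω)) ω) + p ω * log (fiberMass p h ω)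
        - p ω * log (fiberMass p (fun ω => (f ω, h ω)) ω)
        - p ω * log (fiberMass p (fun ω => (g ω, h ω)) ω) := by
    intro ω
    by_cases hω : p ω = 0
    · simp [hω]
    have pos := fun {V : Type} [DecidableEq V] (φ : Ω → V) => (fiberMass_pos p hp φ hω).ne'
    rw [log_div (mul_ne_zero (pos _) (pos _)) (mul_ne_zero (pos _) (pos _)),
      log_mul (pos _) (pos _), log_mul (pos _) (pos _)]
    ring
  simp only [condMI_eq_sum_log, hlog, sum_add_distrib, sum_sub_distrib, entropy]
  ring

end Entropy

section Prefix

variable {α : Type} {n : ℕ}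

-- `X^a` encoded as a vector of fixed type, so that `a` can vary and may be `0` or `n`.
def prefixMask (a : ℕ) (v : Fin n → α) : Fin n → Option α :=
  fun k => if k.val < a then some (v k) else none

theorem prefixMask_eq_iff {a : ℕ} {v w : Fin n → α} :
    prefixMask a v = prefixMask a w ↔ ∀ k : Fin n, k.val < a → v k = w k := by
  simp only [prefixMask, funext_iff]
  exact forall_congr' fun k => by by_cases hk : k.val < a <;> simp [hk]

theorem restrict_eq_iff {m : ℕ} (v w : Fin n → α) (hm : ∀ j : Fin m, (j : ℕ) < n) :
    ((fun j : Fin m => v ⟨j, hm j⟩) = fun j : Fin m => w ⟨j, hm j⟩)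
      ↔ ∀ k : Fin n, k.val < m → v k = w k :=
  funext_iff.trans ⟨fun h k hk => h ⟨k, hk⟩, fun h j => h _ j.isLt⟩

theorem shift_eq_iff {i : ℕ} (v w : Fin n → α) (hi : ∀ j : Fin (n - i), i + (j : ℕ) < n) :
    ((fun j : Fin (n - i) => v ⟨i + j, hi j⟩) = fun j : Fin (n - i) => w ⟨i + j, hi j⟩)
      ↔ ∀ k : Fin n, i ≤ k.val → v k = w k := by
  refine funext_iff.trans ⟨fun h k hk => ?_, fun h j => h _ (Nat.le_add_right _ _)⟩
  have := h ⟨k - i, by omega⟩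
  rwa [show (⟨i + (k - i), _⟩ : Fin n) = k from Fin.ext (by simp; omega)] at this

end Prefix

section PrefixEntropy

variable {X Y : Type} [Fintype X] [DecidableEq X] [Fintype Y] [DecidableEq Y] {n : ℕ}
  (p : (Fin n → X) × (Fin n → Y) → ℝ)

noncomputable def prefixEntropy (a b : ℕ) : ℝ :=
  entropy p fun ω => (prefixMask a ω.1, prefixMask b ω.2)

theorem entropy_eq_prefixEntropy {V : Type} [DecidableEq V]
    (φ : (Fin n → X) × (Fin n → Y) → V) {a b : ℕ}
    (h : ∀ ω ω', φ ω = φ ω' ↔ (∀ k : Fin n, k.val < a → ω.1 k = ω'.1 k) ∧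
      ∀ k : Fin n, k.val < b → ω.2 k = ω'.2 k) :
    entropy p φ = prefixEntropy p a b :=
  entropy_congr p fun ω ω' => by rw [h, Prod.mk.injEq, prefixMask_eq_iff, prefixMask_eq_iff]

theorem condMI_directed_term (hp : ∀ ω, 0 ≤ p ω) (i : Fin n) :
    condMI p (fun ω => ω.2 i) (fun ω (j : Fin (i + 1)) => ω.1 ⟨j, by omega⟩)
        (fun ω (j : Fin i) => ω.2 ⟨j, by omega⟩) =
      prefixEntropy p 0 (i + 1) + prefixEntropy p (i + 1) i - prefixEntropy p (i + 1) (i + 1)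
        - prefixEntropy p 0 i := by
  rw [condMI_eq_entropy p _ _ _ hp, entropy_eq_prefixEntropy p _ (a := 0) (b := i + 1) ?_,
    entropy_eq_prefixEntropy p _ (a := i + 1) (b := i) ?_,
    entropy_eq_prefixEntropy p _ (a := i + 1) (b := i + 1) ?_,
    entropy_eq_prefixEntropy p _ (a := 0) (b := i) ?_]
  all_goals intro ω ω'; simp only [Prod.mk.injEq, restrict_eq_iff] <;> grind

theorem condMI_reverse_term (hp : ∀ ω, 0 ≤ p ω) (i : Fin n) :
    condMI p (fun ω => ω.1 i) (fun ω (j : Fin (n - i)) => ω.2 ⟨i + j, by omega⟩)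
        (fun ω => (fun j : Fin i => ω.1 ⟨j, by omega⟩, fun j : Fin i => ω.2 ⟨j, by omega⟩)) =
      prefixEntropy p (i + 1) i + prefixEntropy p i n - prefixEntropy p (i + 1) n
        - prefixEntropy p i i := by
  rw [condMI_eq_entropy p _ _ _ hp, entropy_eq_prefixEntropy p _ (a := i + 1) (b := i) ?_,
    entropy_eq_prefixEntropy p _ (a := i) (b := n) ?_,
    entropy_eq_prefixEntropy p _ (a := i + 1) (b := n) ?_,
    entropy_eq_prefixEntropy p _ (a := i) (b := i) ?_]
  all_goals intro ω ω'; simp only [Prod.mk.injEq, restrict_eq_iff, shift_eq_iff] <;> grind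

end PrefixEntropy

theorem sum_range_directed_eq_sum_range_reverse (H : ℕ → ℕ → ℝ) (n : ℕ) :
    ∑ i ∈ range n, (H 0 (i + 1) + H (i + 1) i - H (i + 1) (i + 1) - H 0 i) =
      ∑ i ∈ range n, (H (i + 1) i + H i n - H (i + 1) n - H i i) := by
  rw [← sub_eq_zero, ← sum_sub_distrib]
  calc _ = ∑ i ∈ range n,
        ((H 0 (i + 1) + H (i + 1) n - H (i + 1) (i + 1)) - (H 0 i + H i n - H i i)) :=
        sum_congr rfl fun i _ => by ring
    _ = 0 := (sum_range_sub (fun j => H 0 j + H j n - H j j) n).trans (by ring)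

/-- Kim's identity: for jointly distributed `X^n, Y^n` on finite alphabets, the directed
information satisfies
`∑_i I(Y_i; X^i | Y^{i-1}) = ∑_i I(X_i; Y_i^n | X^{i-1}, Y^{i-1})`. -/
theorem kim_identity {X Y : Type} [Fintype X] [DecidableEq X] [Fintype Y] [DecidableEq Y]
    (n : ℕ) (p : (Fin n → X) × (Fin n → Y) → ℝ)
    (hp0 : ∀ ω, 0 ≤ p ω) :
    ∑ i : Fin n,
        condMI p (fun ω => ω.2 i)
          (fun ω => fun j : Fin (i.val + 1) =>
            ω.1 ⟨j.val, by have h1 := j.isLt; have h2 := i.isLt; omega⟩)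
          (fun ω => fun j : Fin i.val =>
            ω.2 ⟨j.val, by have h1 := j.isLt; have h2 := i.isLt; omega⟩) =
      ∑ i : Fin n,
        condMI p (fun ω => ω.1 i)
          (fun ω => fun j : Fin (n - i.val) =>
            ω.2 ⟨i.val + j.val, by have h1 := j.isLt; have h2 := i.isLt; omega⟩)
          (fun ω =>
            ((fun j : Fin i.val =>
                ω.1 ⟨j.val, by have h1 := j.isLt; have h2 := i.isLt; omega⟩),
             (fun j : Fin i.val =>
                ω.2 ⟨j.val, by have h1 := j.isLt; have h2 := i.isLt; omega⟩))) := by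
  simp only [condMI_directed_term p hp0, condMI_reverse_term p hp0]
  simpa only [← Fin.sum_univ_eq_sum_range] using
    sum_range_directed_eq_sum_range_reverse (prefixEntropy p) n
end

section
/- Let X^n, Y^n be finite-valued random sequences with joint distribution P(x^n,y^n) = Q(x^n) P(y^n||x^n) where Q is the uniform distribution on X^n and P(y^n||x^n) = prod_i P(y_i|x^i, y^{i-1}) is a channel causal conditioning distribution. If the directed information I(X^n -> Y^n) = 0 under this uniform input, then P(y^n||x^n) = P(y^n) for all x^n in X^n and y^n in Y^n, where P(y^n) is the marginal output distribution; consequently, max over all causal conditioning input distributions Q(x^n||y^{n-1}) of I(X^n -> Y^n) equals 0. -/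
open Finset Real InformationTheory

lemma mul_klFun_div {p q : ℝ} (hpq : q = 0 → p = 0) :
    q * klFun (p / q) = p * log (p / q) + q - p := by
  rcases eq_or_ne q 0 with rfl | hq
  · simp [hpq rfl]
  · rw [klFun_apply]
    field_simp

theorem eq_of_sum_mul_log_div_eq_zero {ι : Type*} [Fintype ι] {p q : ι → ℝ}
    (hp : ∀ i, 0 ≤ p i) (hq : ∀ i, 0 ≤ q i) (hpq : ∀ i, q i = 0 → p i = 0)
    (hsum : ∑ i, p i = ∑ i, q i) (h : ∑ i, p i * log (p i / q i) = 0) (i : ι) :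
    p i = q i := by
  have hterm : ∀ i, 0 ≤ q i * klFun (p i / q i) := fun i =>
    mul_nonneg (hq i) (klFun_nonneg (div_nonneg (hp i) (hq i)))
  have htotal : ∑ i, q i * klFun (p i / q i) = 0 := by
    simp only [mul_klFun_div (hpq _), sum_sub_distrib, sum_add_distrib, h, hsum]
    ring
  rcases (hq i).eq_or_lt with hqi | hqi
  · rw [← hqi, hpq i hqi.symm]
  · have hi := congrFun ((Fintype.sum_eq_zero_iff_of_nonneg hterm).mp htotal) i
    rwa [Pi.zero_apply, mul_eq_zero, or_iff_right hqi.ne',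
      klFun_eq_zero_iff (div_nonneg (hp i) hqi.le), div_eq_one_iff_eq hqi.ne'] at hi

variable {X Y : Type} [Fintype X] [Fintype Y] {n : ℕ}

lemma sum_inv_card_pow [Nonempty X] :
    ∑ _x : Fin n → X, ((Fintype.card X : ℝ) ^ n)⁻¹ = 1 := by
  simp

lemma isCausalIn_uniform [DecidableEq X] [Nonempty X] :
    IsCausalIn (X := X) (Y := Y) n (fun _ _ => ((Fintype.card X : ℝ) ^ n)⁻¹) :=
  ⟨fun _ _ => by positivity, fun _ => sum_inv_card_pow, fun _ _ _ _ _ _ => rfl⟩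

lemma DI_eq_zero_of_forall_eq {Q : (Fin n → X) → (Fin n → Y) → ℝ}
    {P : (Fin n → Y) → (Fin n → X) → ℝ} {M : (Fin n → Y) → ℝ}
    (hQ : ∀ y, ∑ x, Q x y = 1) (hPM : ∀ x y, P y x = M y) : DI n Q P = 0 := by
  refine sum_eq_zero fun x _ => sum_eq_zero fun y _ => ?_
  simp only [hPM, ← sum_mul, hQ, one_mul]
  rcases eq_or_ne (M y) 0 with h | h <;> simp [h]

lemma eq_sum_of_DI_uniform_eq_zero [Nonempty X] {P : (Fin n → Y) → (Fin n → X) → ℝ}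
    (hP : ∀ y x, 0 ≤ P y x) (hP_sum : ∀ x, ∑ y, P y x = 1)
    (h0 : DI n (fun _ _ => ((Fintype.card X : ℝ) ^ n)⁻¹) P = 0) (x : Fin n → X) (y : Fin n → Y) :
    P y x = ∑ x', ((Fintype.card X : ℝ) ^ n)⁻¹ * P y x' := by
  set c := ((Fintype.card X : ℝ) ^ n)⁻¹
  set M := fun y => ∑ x', c * P y x'
  have hc : 0 < c := by positivity
  have hM : ∀ y, 0 ≤ M y := fun y => sum_nonneg fun x _ => mul_nonneg hc.le (hP y x)
  have hM_sum : ∑ y, M y = 1 := by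
    rw [sum_comm]
    simp only [← mul_sum, hP_sum, mul_one]
    exact sum_inv_card_pow
  have hsupp : ∀ y x, c * M y = 0 → c * P y x = 0 := fun y x h =>
    (sum_eq_zero_iff_of_nonneg fun x _ => mul_nonneg hc.le (hP y x)).mp
      ((mul_eq_zero.mp h).resolve_left hc.ne') x (mem_univ x)
  refine mul_left_cancel₀ hc.ne' <| eq_of_sum_mul_log_div_eq_zero
    (p := fun xy : (Fin n → X) × (Fin n → Y) => c * P xy.2 xy.1) (q := fun xy => c * M xy.2)
    (fun _ => mul_nonneg hc.le (hP _ _)) (fun _ => mul_nonneg hc.le (hM _))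
    (fun xy => hsupp xy.2 xy.1) ?_ ?_ (x, y)
  · simp only [Fintype.sum_prod_type, ← mul_sum, hP_sum, hM_sum]
  · simp only [Fintype.sum_prod_type, mul_div_mul_left _ _ hc.ne']
    exact h0

/-- Lemma 8 of the paper: if under the uniform input distribution on `X^n` the directed
information is zero, then `P(y^n ‖ x^n) = P(y^n)` for all `x^n, y^n` (where `P(y^n)` is
the marginal output distribution), and consequently the maximum of the directed
information over all causal conditioning input distributions is zero. -/
theorem directed_info_zero_iff {X Y : Type} [Fintype X] [DecidableEq X] [Nonempty X]
    [Fintype Y] [DecidableEq Y] (n : ℕ)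
    (P : (Fin n → Y) → (Fin n → X) → ℝ) (hP : IsCausalCh n P)
    (h0 : DI n (fun _ _ => ((Fintype.card X : ℝ) ^ n)⁻¹) P = 0) :
    (∀ (x : Fin n → X) (y : Fin n → Y),
        P y x = ∑ x', ((Fintype.card X : ℝ) ^ n)⁻¹ * P y x') ∧
      IsGreatest {r : ℝ | ∃ Q, IsCausalIn n Q ∧ r = DI n Q P} 0 := by
  have hP_eq := eq_sum_of_DI_uniform_eq_zero hP.1 hP.2.1 h0
  refine ⟨hP_eq, ⟨_, isCausalIn_uniform, h0.symm⟩, ?_⟩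
  rintro _ ⟨Q, hQ, rfl⟩
  exact (DI_eq_zero_of_forall_eq hQ.2.1 hP_eq).le
end

section
/- Suppose K decoders are merged by the following round-robin procedure: each decoder k has a ranking function M_k : B x Y -> {1,...,|B|} (a bijection on B for each y), and the merged ranking M_u assigns ranks by scanning (rank j, decoder k) pairs in lexicographic order (j ascending, k ascending), assigning the next unused merged rank to each not-yet-ranked code-tree. Then for every (a, y) in B x Y and every k in {1,...,K}: M_k(a,y) = j implies M_u(a,y) <= (j-1)K + k, and consequently M_u(a,y) <= K * M_k(a,y). -/
/-!
In the lexicographic scan of the pairs `(j, k)`, the pair `(j, k)` comes at position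
`(j - 1) K + k` (counting from `0`), so the merged decoder ranks the code-trees by the first
position at which some decoder proposes them. Positions determine their pair `(j, k)`, and decoder
`k` proposes a different code-tree at each rank `j`, so distinct code-trees have distinct first
positions. Hence the merged rank of a code-tree first met at position `t` is at most `t + 1`, and
`t ≤ (M_k(a, y) - 1) K + k` for every `k`.
-/

open Finset

section RankBy

variable {α : Type*} [Fintype α] (f : α → ℕ)

def rankBy (a : α) : ℕ := #{b | f b < f a} + 1

variable {f}

theorem rankBy_lt_rankBy {a b : α} (h : f a < f b) : rankBy f a < rankBy f b := by
  have hsub : ({c | f c < f a} : Finset α) ⊂ ({c | f c < f b} : Finset α) :=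
    ssubset_iff_of_subset (fun c hc => by
      simp only [mem_filter, mem_univ, true_and] at hc ⊢; exact hc.trans h)
      |>.mpr ⟨a, by simpa using h, by simp⟩
  simpa [rankBy] using card_lt_card hsub

theorem rankBy_injective (hf : Function.Injective f) : Function.Injective (rankBy f) := by
  intro a b hab
  by_contra hne
  rcases lt_or_gt_of_ne (hf.ne hne) with h | h
  · exact (rankBy_lt_rankBy h).ne hab
  · exact (rankBy_lt_rankBy h).ne' hab

theorem rankBy_mem_Icc (a : α) : rankBy f a ∈ Icc 1 (Fintype.card α) := by
  have : #{b | f b < f a} < Fintype.card α :=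
    card_lt_card (filter_ssubset.mpr ⟨a, mem_univ a, lt_irrefl _⟩)
  simp only [rankBy, mem_Icc]
  omega

theorem rankBy_le (hf : Function.Injective f) (a : α) : rankBy f a ≤ f a + 1 := by
  have hmaps : ∀ b ∈ ({b | f b < f a} : Finset α), f b ∈ range (f a) := fun b hb => by
    simpa using hb
  simpa [rankBy] using card_le_card_of_injOn f hmaps hf.injOn

end RankBy

section FirstVisit

variable {B : Type*} {K : ℕ} [NeZero K]

def firstVisit (M : Fin K → B → ℕ) (a : B) : ℕ :=
  univ.inf' univ_nonempty fun k => (M k a - 1) * K + k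

theorem firstVisit_le (M : Fin K → B → ℕ) (a : B) (k : Fin K) :
    firstVisit M a ≤ (M k a - 1) * K + k :=
  inf'_le _ (mem_univ k)

theorem firstVisit_injective {M : Fin K → B → ℕ} (hpos : ∀ k a, 0 < M k a)
    (hinj : ∀ k, Function.Injective (M k)) : Function.Injective (firstVisit M) := by
  intro a b hab
  obtain ⟨k, -, hk⟩ := exists_mem_eq_inf' univ_nonempty fun k : Fin K => (M k a - 1) * K + k
  obtain ⟨l, -, hl⟩ := exists_mem_eq_inf' univ_nonempty fun k : Fin K => (M k b - 1) * K + k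
  have hpair : ((M k a - 1, k) : ℕ × Fin K) = (M l b - 1, l) := by
    apply (Nat.divModEquiv K).symm.injective
    simp only [Nat.divModEquiv_symm_apply]
    rw [← hk, ← hl]
    exact hab
  obtain ⟨hM, rfl⟩ := Prod.mk.inj hpair
  have := hpos k a
  have := hpos k b
  exact hinj k (by omega)

end FirstVisit

theorem merged_decoder_ranking_general {B Y : Type} [Fintype B]
    (K : ℕ) (hK : 0 < K)
    (M : Fin K → B → Y → ℕ)
    (hrange : ∀ k (y : Y) (a : B), M k a y ∈ Finset.Icc 1 (Fintype.card B))
    (hinj : ∀ k (y : Y), Function.Injective (fun a => M k a y)) :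
    ∃ Mu : B → Y → ℕ,
      (∀ (y : Y) (a : B), Mu a y ∈ Finset.Icc 1 (Fintype.card B)) ∧
      (∀ y : Y, Function.Injective (fun a => Mu a y)) ∧
      (∀ (a : B) (y : Y) (k : Fin K),
        Mu a y ≤ (M k a y - 1) * K + (k.val + 1)) ∧
      (∀ (a : B) (y : Y) (k : Fin K), Mu a y ≤ K * M k a y) := by
  have : NeZero K := ⟨hK.ne'⟩
  have hpos : ∀ y k a, 0 < M k a y := fun y k a => (mem_Icc.mp (hrange k y a)).1
  have hvisit : ∀ y, Function.Injective (firstVisit fun k a => M k a y) := fun y =>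
    firstVisit_injective (hpos y) (hinj · y)
  have hbound : ∀ a y k,
      rankBy (firstVisit fun k a => M k a y) a ≤ (M k a y - 1) * K + (k + 1) := fun a y k => by
    have := rankBy_le (hvisit y) a
    have := firstVisit_le (fun k a => M k a y) a k
    omega
  refine ⟨fun a y => rankBy (firstVisit fun k a => M k a y) a,
    fun y a => rankBy_mem_Icc a, fun y => rankBy_injective (hvisit y), hbound,
    fun a y k => (hbound a y k).trans ?_⟩
  calc (M k a y - 1) * K + (k + 1) ≤ (M k a y - 1) * K + K := by have := k.isLt; omega
    _ = K * M k a y := by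
      rw [← Nat.succ_mul, Nat.succ_eq_add_one, Nat.sub_add_cancel (hpos y k a), Nat.mul_comm]

/-- Merging of maximum-likelihood decoders (Feder–Lapidoth, eq. (34) of the paper):
given `K` ranking functions `M_k : B × Y → {1,…,|B|}` (bijective on `B` for each `y`),
the round-robin merged ranking `M_u` exists, is itself a ranking function, and satisfies
`M_k(a,y) = j → M_u(a,y) ≤ (j-1)K + k` and hence `M_u(a,y) ≤ K · M_k(a,y)`. -/
theorem merged_decoder_ranking {B Y : Type} [Fintype B] [Fintype Y]
    (K : ℕ) (hK : 0 < K)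
    (M : Fin K → B → Y → ℕ)
    (hrange : ∀ k (y : Y) (a : B), M k a y ∈ Finset.Icc 1 (Fintype.card B))
    (hinj : ∀ k (y : Y), Function.Injective (fun a => M k a y)) :
    ∃ Mu : B → Y → ℕ,
      (∀ (y : Y) (a : B), Mu a y ∈ Finset.Icc 1 (Fintype.card B)) ∧
      (∀ y : Y, Function.Injective (fun a => Mu a y)) ∧
      (∀ (a : B) (y : Y) (k : Fin K),
        Mu a y ≤ (M k a y - 1) * K + (k.val + 1)) ∧
      (∀ (a : B) (y : Y) (k : Fin K), Mu a y ≤ K * M k a y) :=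
  merged_decoder_ranking_general K hK M hrange hinj
end

section
/- Let Q_m be a causal conditioning distribution on X^m given Z^{m-1} and define Q_{Nm} as its N-fold product over consecutive length-m blocks. Then there exists a type hat{Q}_{Nm} of concatenated code-trees (depending only on Q_m and N, not on the channel) such that for every channel P, the average error probability of random coding uniform over the type class of hat{Q}_{Nm} satisfies P_e(Nm, R, uniform-over-type, P) <= exp(2 N m delta) * P_e(Nm, R + m delta, Q_{Nm}, P), where delta = |X|^{D(m)} log(N+1)/(Nm) and D(m) = (|Z|^m - 1)/(|Z| - 1). -/
open Classical

/-- The type (empirical distribution, unnormalized: counts out of `N`) of a concatenated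
code-tree `b`, i.e. of an `N`-tuple of depth-`m` code-trees. -/
noncomputable def typeOf {T : Type} [DecidableEq T] {N : ℕ} (b : Fin N → T) : T → ℕ :=
  fun t => (Finset.univ.filter fun i => b i = t).card

/-- Average (over messages) error probability of the codebook `c` of `M` code-trees over
the channel `Pch` under maximum-likelihood decoding (ties counted as errors). -/
noncomputable def mlErr {B O : Type} [Fintype O] (M : ℕ)
    (Pch : B → O → ℝ) (c : Fin M → B) : ℝ :=
  (M : ℝ)⁻¹ * ∑ w : Fin M,
    ∑ o ∈ Finset.univ.filter
      (fun o : O => ∃ w', w' ≠ w ∧ Pch (c w) o ≤ Pch (c w') o), Pch (c w) o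

/-- Average error probability `P_e(M, Q, Pch)` of a random code of `M` code-trees drawn
i.i.d. from the distribution `Q` on code-trees, used over channel `Pch` with
maximum-likelihood decoding. -/
noncomputable def randErr {B O : Type} [Fintype B] [Fintype O] (M : ℕ)
    (Q : B → ℝ) (Pch : B → O → ℝ) : ℝ :=
  ∑ c : Fin M → B, (∏ w, Q (c w)) * mlErr M Pch c

/-!
Let `L = (N+1)^{|X|^D}`, an upper bound on the number of types, and draw `M' * L` code-trees
i.i.d. from the product law `q`. In every such codebook some type occurs at least `M'` times, so
by pigeonhole some type `τ`, chosen without reference to the channel, occurs at least `M'` times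
with probability at least `1/L`. Conditioned on the set of positions whose code-tree has type
`τ`, the code-trees are independent and those of type `τ` are uniform on its type class, since
`q` is constant on type classes. Keeping `M'` of them therefore gives the code drawn uniformly
from the type class; discarding codewords can only decrease each message's ML error, and
averaging over `M'` instead of `M' * L` messages costs a factor `L`. Altogether
`P_e(unif) ≤ L * P(many τ) * P_e(unif) ≤ L^2 * P_e(iid)`.
-/

open Finset Function

theorem Fintype.prod_eq_prod_comp_mul_prod_compl_range {ι κ M : Type*} [Fintype ι]
    [DecidableEq ι] [Fintype κ] [CommMonoid M] {e : κ → ι} (he : Injective e) (F : ι → M) :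
    ∏ i, F i = (∏ k, F (e k)) * ∏ i : {i // i ∉ Set.range e}, F i := by
  rw [← Fintype.prod_subtype_mul_prod_subtype (· ∈ Set.range e) F]
  congr 1
  convert Fintype.prod_equiv (Equiv.ofInjective e he).symm (fun i : {i // i ∈ Set.range e} => F i)
    (fun k => F (e k)) fun i => congrArg F (Equiv.apply_ofInjective_symm he i).symm

theorem Fintype.sum_prod_mul_comp_of_injective {ι κ α R : Type*} [Fintype ι] [Fintype κ]
    [Fintype α] [DecidableEq ι] [DecidableEq κ] [CommSemiring R] {e : κ → ι} (he : Injective e)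
    (f : ι → α → R) (g : (κ → α) → R) :
    ∑ c : ι → α, (∏ i, f i (c i)) * g (c ∘ e) =
      (∏ i : {i // i ∉ Set.range e}, ∑ a, f i a) * ∑ d : κ → α, (∏ k, f (e k) (d k)) * g d := by
  let E := (Equiv.piEquivPiSubtypeProd (· ∈ Set.range e) fun _ => α).trans
    (((Equiv.ofInjective e he).arrowCongr (Equiv.refl α)).symm.prodCongr (Equiv.refl _))
  have hE : ∀ c, E c = (c ∘ e, fun i => c i.1) := fun c => rfl
  calc ∑ c : ι → α, (∏ i, f i (c i)) * g (c ∘ e)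
      = ∑ p : (κ → α) × ({i // i ∉ Set.range e} → α),
          (∏ i : {i // i ∉ Set.range e}, f i (p.2 i)) * ((∏ k, f (e k) (p.1 k)) * g p.1) :=
        Fintype.sum_equiv E _ _ fun c => by
          rw [hE, prod_eq_prod_comp_mul_prod_compl_range he]
          dsimp only [comp_apply]
          ring
    _ = _ := by
        rw [Fintype.sum_prod_type, Finset.sum_comm, Fintype.prod_sum, Finset.sum_mul_sum]

section ErrorProbability

variable {B O : Type} [Fintype O] (Pch : B → O → ℝ)

noncomputable def msgErr {M : ℕ} (c : Fin M → B) (w : Fin M) : ℝ :=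
  ∑ o ∈ Finset.univ.filter
      (fun o : O => ∃ w', w' ≠ w ∧ Pch (c w) o ≤ Pch (c w') o), Pch (c w) o

theorem mlErr_eq_inv_mul_sum_msgErr (M : ℕ) (c : Fin M → B) :
    mlErr M Pch c = (M : ℝ)⁻¹ * ∑ w, msgErr Pch c w := rfl

variable {Pch}

theorem msgErr_nonneg (hP : ∀ b o, 0 ≤ Pch b o) {M : ℕ} (c : Fin M → B) (w : Fin M) :
    0 ≤ msgErr Pch c w :=
  sum_nonneg fun o _ => hP _ o

theorem mlErr_nonneg (hP : ∀ b o, 0 ≤ Pch b o) (M : ℕ) (c : Fin M → B) : 0 ≤ mlErr M Pch c :=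
  mul_nonneg (inv_nonneg.2 M.cast_nonneg) (sum_nonneg fun w _ => msgErr_nonneg hP c w)

theorem randErr_nonneg [Fintype B] (hP : ∀ b o, 0 ≤ Pch b o) {Q : B → ℝ} (hQ : ∀ b, 0 ≤ Q b)
    (M : ℕ) :
    0 ≤ randErr M Q Pch :=
  sum_nonneg fun c _ => mul_nonneg (prod_nonneg fun _ _ => hQ _) (mlErr_nonneg hP M c)

theorem msgErr_comp_le (hP : ∀ b o, 0 ≤ Pch b o) {M M' : ℕ} (c : Fin M → B) {e : Fin M' → Fin M}
    (he : Injective e) (k : Fin M') : msgErr Pch (c ∘ e) k ≤ msgErr Pch c (e k) := by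
  refine sum_le_sum_of_subset_of_nonneg (fun o ho => ?_) fun o _ _ => hP _ o
  obtain ⟨w', hw', hle⟩ := (mem_filter.1 ho).2
  exact mem_filter.2 ⟨mem_univ o, e w', he.ne hw', hle⟩

theorem mlErr_comp_le (hP : ∀ b o, 0 ≤ Pch b o) {M' L : ℕ} (c : Fin (M' * L) → B)
    {e : Fin M' → Fin (M' * L)} (he : Injective e) :
    mlErr M' Pch (c ∘ e) ≤ L * mlErr (M' * L) Pch c := by
  rcases M'.eq_zero_or_pos with rfl | hM'
  · simp [mlErr]
  have hL : L ≠ 0 := by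
    rintro rfl
    exact (e ⟨0, hM'⟩).elim0
  have hsum : ∑ k, msgErr Pch (c ∘ e) k ≤ ∑ i, msgErr Pch c i :=
    calc ∑ k, msgErr Pch (c ∘ e) k ≤ ∑ k, msgErr Pch c (e k) :=
          sum_le_sum fun k _ => msgErr_comp_le hP c he k
      _ = ∑ i ∈ univ.map ⟨e, he⟩, msgErr Pch c i := (sum_map univ ⟨e, he⟩ _).symm
      _ ≤ ∑ i, msgErr Pch c i := sum_le_univ_sum_of_nonneg (msgErr_nonneg hP c)
  have hcoef : (L : ℝ) * ((M' * L : ℕ) : ℝ)⁻¹ = (M' : ℝ)⁻¹ := by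
    push_cast
    field_simp
  rw [mlErr_eq_inv_mul_sum_msgErr, mlErr_eq_inv_mul_sum_msgErr, ← mul_assoc, hcoef]
  exact mul_le_mul_of_nonneg_left hsum (inv_nonneg.2 (Nat.cast_nonneg _))

end ErrorProbability

section Fibers

variable {B Θ : Type} [DecidableEq Θ] (t : B → Θ)

noncomputable def positionsOf {n : ℕ} (θ : Θ) (c : Fin n → B) : Finset (Fin n) :=
  univ.filter fun w => t (c w) = θ

/-- The law of the `w`-th codeword jointly with the event that it has type `θ` exactly when
`w ∈ S`. -/
noncomputable def patternWeight (q : B → ℝ) {n : ℕ} (θ : Θ) (S : Finset (Fin n)) (w : Fin n)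
    (b : B) : ℝ :=
  if (t b = θ ↔ w ∈ S) then q b else 0

theorem prod_patternWeight (q : B → ℝ) {n : ℕ} (θ : Θ) (S : Finset (Fin n)) (c : Fin n → B) :
    ∏ w, patternWeight t q θ S w (c w) = if positionsOf t θ c = S then ∏ w, q (c w) else 0 := by
  simp only [patternWeight, Fintype.prod_ite_zero, positionsOf, Finset.ext_iff, mem_filter,
    mem_univ, true_and]
  congr 1

variable [Fintype B]

noncomputable def codebooksWithAtLeast (θ : Θ) (M' n : ℕ) : Finset (Fin n → B) :=
  univ.filter fun c => M' ≤ #(positionsOf t θ c)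

theorem mem_codebooksWithAtLeast {θ : Θ} {M' n : ℕ} {c : Fin n → B} :
    c ∈ codebooksWithAtLeast t θ M' n ↔ M' ≤ #(positionsOf t θ c) := by
  simp [codebooksWithAtLeast]

noncomputable def fiberUniform (θ : Θ) : B → ℝ :=
  fun b => if t b = θ then ((univ.filter fun b' => t b' = θ).card : ℝ)⁻¹ else 0

theorem fiberUniform_nonneg (θ : Θ) (b : B) : 0 ≤ fiberUniform t θ b := by
  unfold fiberUniform
  split_ifs <;> positivity

theorem ite_eq_sum_fiber_mul_fiberUniform {q : B → ℝ} (hqt : ∀ b b', t b = t b' → q b = q b')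
    (θ : Θ) (b : B) :
    (if t b = θ then q b else 0) =
      (∑ b' ∈ univ.filter fun b' => t b' = θ, q b') * fiberUniform t θ b := by
  unfold fiberUniform
  split_ifs with hb
  · have hmem : b ∈ univ.filter fun b' => t b' = θ := mem_filter.2 ⟨mem_univ b, hb⟩
    rw [sum_congr rfl fun b' hb' => hqt b' b ((mem_filter.1 hb').2.trans hb.symm), sum_const,
      nsmul_eq_mul, mul_right_comm, mul_inv_cancel₀ (by exact_mod_cast (card_ne_zero_of_mem hmem)),
      one_mul]
  · rw [mul_zero]

theorem sum_codebooksWithAtLeast_eq_sum_patternWeight (q : B → ℝ) (θ : Θ) (M' n : ℕ)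
    (h : (Fin n → B) → ℝ) :
    ∑ c ∈ codebooksWithAtLeast t θ M' n, (∏ w, q (c w)) * h c =
      ∑ S ∈ univ.filter (fun S : Finset (Fin n) => M' ≤ #S),
        ∑ c, (∏ w, patternWeight t q θ S w (c w)) * h c := by
  rw [codebooksWithAtLeast, sum_comm]
  simp only [prod_patternWeight, ite_mul, zero_mul, sum_ite_eq, sum_filter, mem_filter, mem_univ,
    true_and]

end Fibers

section RandomCoding

variable {B Θ : Type} [Fintype B] [DecidableEq Θ] {t : B → Θ} {q : B → ℝ}
  {O : Type} [Fintype O] {Pch : B → O → ℝ}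

theorem sum_patternWeight_mul_randErr_le (hq0 : ∀ b, 0 ≤ q b)
    (hqt : ∀ b b', t b = t b' → q b = q b') (hP : ∀ b o, 0 ≤ Pch b o) (θ : Θ) {M' L : ℕ}
    {S : Finset (Fin (M' * L))} (hS : M' ≤ #S) :
    (∑ c : Fin (M' * L) → B, ∏ w, patternWeight t q θ S w (c w)) *
        randErr M' (fiberUniform t θ) Pch ≤
      L * ∑ c : Fin (M' * L) → B, (∏ w, patternWeight t q θ S w (c w)) * mlErr (M' * L) Pch c := by
  obtain ⟨e, he, heS⟩ : ∃ e : Fin M' → Fin (M' * L), Injective e ∧ ∀ k, e k ∈ S := by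
    obtain ⟨e⟩ : Nonempty (Fin M' ↪ S) :=
      Function.Embedding.nonempty_of_card_le (by simpa using hS)
    exact ⟨fun k => e k, Subtype.val_injective.comp e.injective, fun k => (e k).2⟩
  set pw := patternWeight t q θ S
  set p := ∑ b ∈ univ.filter fun b => t b = θ, q b
  have hsel : ∀ k, pw (e k) = fun b => if t b = θ then q b else 0 := fun k =>
    funext fun b => by simp [pw, patternWeight, heS k]
  -- At the selected positions the weight is `p` times the uniform law on the type class, so the
  -- subcode `c ∘ e` is distributed as the uniform-over-type random code.
  calc (∑ c : Fin (M' * L) → B, ∏ w, pw w (c w)) * randErr M' (fiberUniform t θ) Pch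
      = (∏ i : {i // i ∉ Set.range e}, ∑ b, pw i b) *
          ∑ d : Fin M' → B, (∏ k, pw (e k) (d k)) * mlErr M' Pch d := by
        rw [← Fintype.prod_sum, Fintype.prod_eq_prod_comp_mul_prod_compl_range he,
          mul_comm (∏ k, _), mul_assoc]
        congr 1
        have hmass : ∀ k, ∑ b, pw (e k) b = p := fun k => by simp only [hsel, p, sum_filter]
        have hcode : ∀ d : Fin M' → B,
            ∏ k, pw (e k) (d k) = p ^ M' * ∏ k, fiberUniform t θ (d k) := fun d => by
          simp only [hsel, ite_eq_sum_fiber_mul_fiberUniform t hqt, prod_mul_distrib, prod_const,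
            card_univ, Fintype.card_fin, p]
        simp only [hmass, hcode, prod_const, card_univ, Fintype.card_fin, randErr, mul_sum,
          mul_assoc]
    _ = ∑ c : Fin (M' * L) → B, (∏ w, pw w (c w)) * mlErr M' Pch (c ∘ e) :=
        (Fintype.sum_prod_mul_comp_of_injective he _ _).symm
    _ ≤ ∑ c : Fin (M' * L) → B, (∏ w, pw w (c w)) * (L * mlErr (M' * L) Pch c) :=
        sum_le_sum fun c _ => mul_le_mul_of_nonneg_left (mlErr_comp_le hP c he)
          (prod_nonneg fun w _ => by unfold pw patternWeight; split_ifs <;> simp [hq0])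
    _ = L * ∑ c : Fin (M' * L) → B, (∏ w, pw w (c w)) * mlErr (M' * L) Pch c := by
        rw [mul_sum]
        exact sum_congr rfl fun c _ => mul_left_comm _ _ _

theorem sum_codebooksWithAtLeast_mul_randErr_le (hq0 : ∀ b, 0 ≤ q b)
    (hqt : ∀ b b', t b = t b' → q b = q b') (hP : ∀ b o, 0 ≤ Pch b o) (θ : Θ) (M' L : ℕ) :
    (∑ c ∈ codebooksWithAtLeast t θ M' (M' * L), ∏ w, q (c w)) *
        randErr M' (fiberUniform t θ) Pch ≤
      L * randErr (M' * L) q Pch := by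
  have hsplit := sum_codebooksWithAtLeast_eq_sum_patternWeight t q θ M' (M' * L)
  calc (∑ c ∈ codebooksWithAtLeast t θ M' (M' * L),
          ∏ w, q (c w)) * randErr M' (fiberUniform t θ) Pch
      = ∑ S ∈ univ.filter (fun S : Finset (Fin (M' * L)) => M' ≤ #S),
          (∑ c : Fin (M' * L) → B, ∏ w, patternWeight t q θ S w (c w)) *
            randErr M' (fiberUniform t θ) Pch := by
        simpa only [mul_one, sum_mul] using congrArg (· * randErr M' (fiberUniform t θ) Pch)
          (hsplit fun _ => 1)
    _ ≤ ∑ S ∈ univ.filter (fun S : Finset (Fin (M' * L)) => M' ≤ #S),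
          L * ∑ c : Fin (M' * L) → B,
            (∏ w, patternWeight t q θ S w (c w)) * mlErr (M' * L) Pch c :=
        sum_le_sum fun S hS => sum_patternWeight_mul_randErr_le hq0 hqt hP θ (mem_filter.1 hS).2
    _ = L * ∑ c ∈ codebooksWithAtLeast t θ M' (M' * L),
          (∏ w, q (c w)) * mlErr (M' * L) Pch c := by
        rw [← mul_sum, hsplit]
    _ ≤ L * randErr (M' * L) q Pch :=
        mul_le_mul_of_nonneg_left (sum_le_univ_sum_of_nonneg fun c =>
          mul_nonneg (prod_nonneg fun w _ => hq0 _) (mlErr_nonneg hP _ c)) L.cast_nonneg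

end RandomCoding

section Pigeonhole

variable {B Θ : Type} [Fintype B] [DecidableEq Θ] (t : B → Θ) {q : B → ℝ}

theorem exists_one_le_mul_sum_codebooksWithAtLeast (hq0 : ∀ b, 0 ≤ q b) (hq1 : ∑ b, q b = 1)
    {L : ℕ} (hL : #(univ.image t) ≤ L) (M' : ℕ) :
    ∃ θ ∈ univ.image t, 1 ≤ (L : ℝ) *
      ∑ c ∈ codebooksWithAtLeast t θ M' (M' * L), ∏ w, q (c w) := by
  have hne : (univ.image t).Nonempty :=
    (nonempty_of_sum_ne_zero (hq1.trans_ne one_ne_zero)).image t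
  have hLpos : (0 : ℝ) < L := by exact_mod_cast (card_pos.2 hne).trans_le hL
  have hmajority : ∀ c : Fin (M' * L) → B, ∃ θ ∈ univ.image t, M' ≤ #(positionsOf t θ c) :=
    fun c => exists_le_card_fiber_of_mul_le_card_of_maps_to
      (fun w _ => mem_image_of_mem t (mem_univ (c w))) hne
      (by rw [card_univ, Fintype.card_fin, mul_comm]; exact Nat.mul_le_mul_left M' hL)
  choose majority hmajority_mem hmajority using hmajority
  have htotal : ∑ c : Fin (M' * L) → B, ∏ w, q (c w) = 1 := by
    rw [← Fintype.sum_pow, hq1, one_pow]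
  obtain ⟨θ, hθ, hfiber⟩ := exists_le_sum_fiber_of_maps_to_of_nsmul_le_sum
    (fun c _ => hmajority_mem c) hne (w := fun c => ∏ w, q (c w)) (b := (L : ℝ)⁻¹)
    (by
      rw [htotal, nsmul_eq_mul, ← div_eq_mul_inv, div_le_one hLpos]
      exact_mod_cast hL)
  refine ⟨θ, hθ, ?_⟩
  calc (1 : ℝ) = L * (L : ℝ)⁻¹ := (mul_inv_cancel₀ hLpos.ne').symm
    _ ≤ _ := by
      refine mul_le_mul_of_nonneg_left (hfiber.trans (sum_le_sum_of_subset_of_nonneg ?_ ?_))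
        hLpos.le
      · intro c hc
        exact (mem_codebooksWithAtLeast t).2 ((mem_filter.1 hc).2 ▸ hmajority c)
      · exact fun c _ _ => prod_nonneg fun w _ => hq0 _

theorem exists_fiberUniform_randErr_le (hq0 : ∀ b, 0 ≤ q b) (hq1 : ∑ b, q b = 1)
    (hqt : ∀ b b', t b = t b' → q b = q b') {L : ℕ} (hL : #(univ.image t) ≤ L) (M' : ℕ) :
    ∃ θ ∈ univ.image t, ∀ (O : Type) [Fintype O] (Pch : B → O → ℝ), (∀ b o, 0 ≤ Pch b o) →
      randErr M' (fiberUniform t θ) Pch ≤ (L : ℝ) ^ 2 * randErr (M' * L) q Pch := by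
  obtain ⟨θ, hθ, hmany⟩ := exists_one_le_mul_sum_codebooksWithAtLeast t hq0 hq1 hL M'
  refine ⟨θ, hθ, fun O _ Pch hP => ?_⟩
  have hU := randErr_nonneg hP (fiberUniform_nonneg t θ) M'
  calc randErr M' (fiberUniform t θ) Pch
      ≤ (L * ∑ c ∈ codebooksWithAtLeast t θ M' (M' * L),
          ∏ w, q (c w)) * randErr M' (fiberUniform t θ) Pch := le_mul_of_one_le_left hU hmany
    _ ≤ L * (L * randErr (M' * L) q Pch) := by
        rw [mul_assoc]
        exact mul_le_mul_of_nonneg_left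
          (sum_codebooksWithAtLeast_mul_randErr_le hq0 hqt hP θ M' L) L.cast_nonneg
    _ = (L : ℝ) ^ 2 * randErr (M' * L) q Pch := by ring

end Pigeonhole

section CodeTreeTypes

variable {T : Type} [DecidableEq T] {N : ℕ}

theorem typeOf_le (b : Fin N → T) (x : T) : typeOf b x ≤ N :=
  (card_filter_le _ _).trans_eq (card_fin N)

theorem prod_apply_eq_prod_pow_typeOf [Fintype T] {M : Type*} [CommMonoid M] (f : T → M)
    (b : Fin N → T) : ∏ i, f (b i) = ∏ x, f x ^ typeOf b x := by
  rw [← prod_fiberwise' univ b f]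
  simp only [prod_const]
  rfl

theorem card_image_typeOf_le [Fintype T] :
    #(univ.image (typeOf (T := T) (N := N))) ≤ (N + 1) ^ Fintype.card T :=
  calc #(univ.image (typeOf (T := T) (N := N)))
      ≤ #(Fintype.piFinset fun _ : T => range (N + 1)) :=
        card_le_card (image_subset_iff.2 fun b _ => Fintype.mem_piFinset.2 fun x =>
          mem_range.2 (Nat.lt_succ_of_le (typeOf_le b x)))
    _ = (N + 1) ^ Fintype.card T := by simp

end CodeTreeTypes

theorem types_on_code_trees_general {X : Type} [Fintype X] [DecidableEq X]
    (N : ℕ) (D : ℕ) (Qtree : (Fin D → X) → ℝ)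
    (hQ0 : ∀ a, 0 ≤ Qtree a) (hQ1 : ∑ a, Qtree a = 1)
    (M' : ℕ) :
    ∃ τ : (Fin D → X) → ℕ,
      (∃ b : Fin N → Fin D → X, typeOf b = τ) ∧
      ∀ (O : Type) (_ : Fintype O) (Pch : (Fin N → Fin D → X) → O → ℝ),
        (∀ b o, 0 ≤ Pch b o) → (∀ b, ∑ o, Pch b o = 1) →
        randErr M'
            (fun b => if typeOf b = τ
              then ((Finset.univ.filter
                  fun b' : Fin N → Fin D → X => typeOf b' = τ).card : ℝ)⁻¹
              else 0) Pch ≤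
          (N + 1 : ℝ) ^ (2 * Fintype.card (Fin D → X)) *
            randErr (M' * (N + 1) ^ Fintype.card (Fin D → X))
              (fun b => ∏ i, Qtree (b i)) Pch := by
  obtain ⟨τ, hτ, hbound⟩ := exists_fiberUniform_randErr_le typeOf
    (q := fun b : Fin N → Fin D → X => ∏ i, Qtree (b i))
    (fun b => prod_nonneg fun i _ => hQ0 (b i))
    (by rw [← Fintype.sum_pow, hQ1, one_pow])
    (fun b b' h => by simp only [prod_apply_eq_prod_pow_typeOf Qtree, h])
    card_image_typeOf_le M'
  refine ⟨τ, by simpa using hτ, fun O _ Pch hP _ => ?_⟩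
  have hL : ((((N + 1) ^ Fintype.card (Fin D → X) : ℕ) : ℝ)) ^ 2 =
      (N + 1 : ℝ) ^ (2 * Fintype.card (Fin D → X)) := by
    push_cast
    rw [← pow_mul, mul_comm]
  exact hL ▸ hbound O Pch hP

/-- Lemma 1 of the paper (types on code-trees): given a distribution `Qtree` on depth-`m`
code-trees (elements of `X^{D(m)}`, `D(m) = (|Z|^m - 1)/(|Z|-1)`), there is a type
`τ` of concatenated code-trees, depending only on `Qtree` and `N` and not on the channel,
such that for every channel `Pch`, random coding with `M' = e^{NR}` code-trees drawn
uniformly from the type class of `τ` has average ML-decoding error probability at most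
`exp(2Nmδ) = (N+1)^{2|X|^{D(m)}}` times that of random coding with
`M = M'·(N+1)^{|X|^{D(m)}} = e^{N(R + mδ)}` code-trees drawn i.i.d. from the `N`-fold
product of `Qtree`, where `δ = |X|^{D(m)} log(N+1)/(Nm)`. -/
theorem types_on_code_trees {X Z : Type} [Fintype X] [DecidableEq X] [Fintype Z]
    (m N : ℕ) (hm : 0 < m) (hN : 0 < N)
    (D : ℕ) (hD : D = (Fintype.card Z ^ m - 1) / (Fintype.card Z - 1))
    (Qtree : (Fin D → X) → ℝ)
    (hQ0 : ∀ a, 0 ≤ Qtree a) (hQ1 : ∑ a, Qtree a = 1)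
    (M' : ℕ) (hM' : 0 < M') :
    ∃ τ : (Fin D → X) → ℕ,
      (∃ b : Fin N → Fin D → X, typeOf b = τ) ∧
      ∀ (O : Type) (_ : Fintype O) (Pch : (Fin N → Fin D → X) → O → ℝ),
        (∀ b o, 0 ≤ Pch b o) → (∀ b, ∑ o, Pch b o = 1) →
        randErr M'
            (fun b => if typeOf b = τ
              then ((Finset.univ.filter
                  fun b' : Fin N → Fin D → X => typeOf b' = τ).card : ℝ)⁻¹
              else 0) Pch ≤
          (N + 1 : ℝ) ^ (2 * Fintype.card (Fin D → X)) *
            randErr (M' * (N + 1) ^ Fintype.card (Fin D → X))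
              (fun b => ∏ i, Qtree (b i)) Pch :=
  types_on_code_trees_general N D Qtree hQ0 hQ1 M'
end
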